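/- arXiv:2404.01832 — 2 statements merged into one kernel-verified Lean document; each statement's English description precedes it below -/
import Mathlib

section
/- Let Y_1, …, Y_ν be real numbers with ν ≥ 3 such that the Y_i are pairwise distinct and, for every κ ∈ {1,…,ν−1}, the quantity L(κ) = (κ(ν−κ)/ν)·((1/κ)∑_{λ≤κ} Y_λ − (1/(ν−κ))∑_{λ>κ} Y_λ)² takes the same value K. Then one obtains a contradiction unless the Y_i satisfy an algebraically degenerate relation that occurs with probability zero for continuous random variables; formally: if Y_1,…,Y_ν are such that L is constant in κ, then either Y_1 = Y_ν or Y_1 = Y_ν ± 2√(((ν−1)/ν)·K). -/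
/-- If the empirical CART criterion is constant in the split location κ, then the first
and last responses satisfy a degenerate algebraic relation. -/
theorem stmt1 (ν : ℕ) (hν : 3 ≤ ν) (Y : ℕ → ℝ) (K : ℝ)
    (hK : ∀ κ ∈ Finset.Icc 1 (ν - 1),
      ((κ : ℝ) * ((ν : ℝ) - κ) / ν) *
        ((1 / (κ : ℝ)) * ∑ l ∈ Finset.Icc 1 κ, Y l
          - (1 / ((ν : ℝ) - κ)) * ∑ l ∈ Finset.Icc (κ + 1) ν, Y l) ^ 2 = K) :
    Y 1 = Y ν ∨ Y 1 = Y ν + 2 * Real.sqrt (((ν : ℝ) - 1) / ν * K)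
      ∨ Y 1 = Y ν - 2 * Real.sqrt (((ν : ℝ) - 1) / ν * K) := by
  have hν1 : 1 ≤ ν := by omega
  have hn3 : (3 : ℝ) ≤ (ν : ℝ) := by exact_mod_cast hν
  set n : ℝ := (ν : ℝ) with hn
  have hn0 : n ≠ 0 := by nlinarith
  have hn1 : n - 1 ≠ 0 := by nlinarith
  have h1 := hK 1 (by simp [Finset.mem_Icc]; omega)
  have h2 := hK (ν - 1) (by simp [Finset.mem_Icc]; omega)
  have hνeq : ν - 1 + 1 = ν := by omega
  have hsum1 : ∑ l ∈ Finset.Icc 1 1, Y l = Y 1 := by simp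
  have hsum2 : ∑ l ∈ Finset.Icc (ν - 1 + 1) ν, Y l = Y ν := by rw [hνeq]; simp
  have hsplit : ∑ l ∈ Finset.Icc 1 ν, Y l = (∑ l ∈ Finset.Icc 1 (ν - 1), Y l) + Y ν := by
    conv_lhs => rw [← hνeq]
    rw [Finset.sum_Icc_succ_top (by omega), hνeq]
  have hsplit2 : ∑ l ∈ Finset.Icc 1 ν, Y l = Y 1 + ∑ l ∈ Finset.Icc 2 ν, Y l := by
    have hins : Finset.Icc 1 ν = insert 1 (Finset.Icc 2 ν) := by
      ext x; simp [Finset.mem_Icc, Finset.mem_insert]; omega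
    rw [hins, Finset.sum_insert (by simp [Finset.mem_Icc])]
  set T : ℝ := ∑ l ∈ Finset.Icc 2 ν, Y l with hT
  set S1 : ℝ := ∑ l ∈ Finset.Icc 1 (ν - 1), Y l with hS1
  have hS1T : S1 = Y 1 + T - Y ν := by
    have := hsplit.symm.trans hsplit2
    linarith
  have hcast : ((ν - 1 : ℕ) : ℝ) = n - 1 := by
    rw [Nat.cast_sub hν1]; simp [hn]
  rw [hsum2, hcast] at h2
  rw [hsum1] at h1
  set u : ℝ := Y 1 with hu
  set v : ℝ := Y ν with hv
  clear_value T S1 n u v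
  clear hK hsum1 hsum2 hsplit hsplit2 hT hS1 hνeq hu hv hn hν hν1
  -- now pure real algebra
  set a : ℝ := u - (1 / (n - 1)) * T with ha
  set b : ℝ := (1 / (n - 1)) * S1 - v with hb
  have h1' : ((n - 1) / n) * a ^ 2 = K := by
    rw [← h1, ha]; push_cast; ring
  have h2' : ((n - 1) / n) * b ^ 2 = K := by
    rw [← h2, hb]
    have h11 : n - (n - 1) = 1 := by ring
    rw [h11]; ring
  have hab : (a - b) * (a + b) = 0 := by
    have hd : ((n - 1) / n) * (a ^ 2 - b ^ 2) = 0 := by rw [mul_sub, h1', h2']; ring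
    have hne : (n - 1) / n ≠ 0 := div_ne_zero hn1 hn0
    rcases mul_eq_zero.mp hd with h | h
    · exact absurd h hne
    · linear_combination h
  have hsumab : a + b = (u - v) * n / (n - 1) := by
    rw [ha, hb, hS1T]
    field_simp
    ring
  have hfr : (0:ℝ) < (n - 1) / n := div_pos (by nlinarith) (by nlinarith)
  clear_value a b
  clear h1 h2 hS1T
  rcases mul_eq_zero.mp hab with h | h
  · -- a = b
    have hab' : a = b := by linarith
    have hY : u - v = 2 * a * (n - 1) / n := by
      have h2a : 2 * a = (u - v) * n / (n - 1) := by rw [← hsumab, hab']; ring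
      field_simp at h2a ⊢
      linarith
    have hKval : (n - 1) / n * K = (((n - 1) / n) * a) ^ 2 := by
      rw [← h1']
      field_simp
    have hsqrt : Real.sqrt ((n - 1) / n * K) = |((n - 1) / n) * a| := by
      rw [hKval, Real.sqrt_sq_eq_abs]
    have hY' : u - v = 2 * ((n - 1) / n * a) := by
      rw [hY]; ring
    rcases le_or_gt 0 a with hpos | hneg
    · right; left
      have hfrac : (0:ℝ) ≤ (n - 1) / n := le_of_lt hfr
      rw [hsqrt, abs_of_nonneg (mul_nonneg hfrac hpos)]
      linarith
    · right; right
      have habs : |((n - 1) / n) * a| = -(((n - 1) / n) * a) := by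
        apply abs_of_neg
        exact mul_neg_of_pos_of_neg hfr hneg
      rw [hsqrt, habs]
      linarith
  · -- a = -b
    left
    have hz : (u - v) * n / (n - 1) = 0 := by rw [← hsumab]; linarith
    rcases div_eq_zero_iff.mp hz with h' | h'
    · rcases mul_eq_zero.mp h' with h'' | h''
      · linarith
      · exact absurd h'' hn0
    · exact absurd h' hn1
end

section
/- If Y_1, …, Y_ν (ν ≥ 3) are i.i.d. real random variables with continuous (atomless) distribution, then almost surely the empirical CART criterion L(κ) = (κ(ν−κ)/ν)·((1/κ)∑_{λ≤κ} Y_λ − (1/(ν−κ))∑_{λ>κ} Y_λ)² is not constant as a function of κ ∈ {1,…,ν−1}. -/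
/-!
Only the splits κ = 1 and κ = 2 are needed. With u = Y₂ and s = Y₂ + ⋯ + Yₙ one computes
2 (L(1) − L(2)) = (Y₁ − u)² − D(u, s) for an explicit rational function D, so L(1) = L(2) forces
Y₁ = u ± √D(u, s). Since Y₁ is atomless and independent of (u, s), by Fubini over the product law it
hits either of these two measurable functions of (u, s) with probability zero.
-/

open MeasureTheory ProbabilityTheory Finset

noncomputable def cartCriterion (n : ℕ) (y : ℕ → ℝ) (κ : ℕ) : ℝ :=
  ((κ : ℝ) * ((n : ℝ) - κ) / n) *
    ((1 / (κ : ℝ)) * ∑ l ∈ Icc 1 κ, y l - (1 / ((n : ℝ) - κ)) * ∑ l ∈ Icc (κ + 1) n, y l) ^ 2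

noncomputable def cartTieThreshold (m u s : ℝ) : ℝ :=
  2 * (m - 1) * u ^ 2 / m - 4 * u * (s - u) / m + 4 * (s - u) ^ 2 / (m * (m - 2))
    - 2 * s ^ 2 / (m * (m - 1))

theorem cartCriterion_one_eq_two_iff {n : ℕ} (hn : 3 ≤ n) (y : ℕ → ℝ) :
    cartCriterion n y 1 = cartCriterion n y 2
      ↔ (y 1 - y 2) ^ 2 = cartTieThreshold n (y 2) (∑ l ∈ Icc 2 n, y l) := by
  have hm : (3 : ℝ) ≤ n := by exact_mod_cast hn
  have hm0 : (n : ℝ) ≠ 0 := by linarith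
  have hm1 : (n : ℝ) - 1 ≠ 0 := by linarith
  have hm2 : (n : ℝ) - 2 ≠ 0 := by linarith
  have hsplit : ∑ l ∈ Icc 2 n, y l = y 2 + ∑ l ∈ Icc 3 n, y l := by
    rw [← add_sum_Ioc_eq_sum_Icc (by omega), ← Icc_add_one_left_eq_Ioc]
    rfl
  have hpair : ∑ l ∈ Icc 1 2, y l = y 1 + y 2 := by
    rw [← add_sum_Ioc_eq_sum_Icc (by omega)]
    simp
  have hgap : 2 * (cartCriterion n y 1 - cartCriterion n y 2)
      = (y 1 - y 2) ^ 2 - cartTieThreshold n (y 2) (∑ l ∈ Icc 2 n, y l) := by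
    simp only [cartCriterion, cartTieThreshold, hsplit, hpair, Icc_self, sum_singleton]
    norm_num
    field_simp
    ring
  rw [← sub_eq_zero (a := (y 1 - y 2) ^ 2), ← hgap]
  simp [sub_eq_zero]

theorem eq_add_sqrt_or_eq_sub_sqrt_of_sq_sub_eq {t u w : ℝ} (h : (t - u) ^ 2 = w) :
    t = u + √w ∨ t = u - √w := by
  have habs : |t - u| = √w := by rw [← h, Real.sqrt_sq_eq_abs]
  rcases abs_cases (t - u) with ⟨hpos, -⟩ | ⟨hneg, -⟩
  · left; linarith
  · right; linarith

theorem ProbabilityTheory.IndepFun.measure_eq_comp_eq_zero {Ω α β : Type*} [MeasurableSpace Ω]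
    {μ : Measure Ω} [IsFiniteMeasure μ] [MeasurableSpace α] [MeasurableEq α] [MeasurableSpace β]
    {X : Ω → α} {Z : Ω → β} (hX : Measurable X) (hZ : Measurable Z) (hZX : IndepFun Z X μ)
    [NullSingletonClass (μ.map X)] {g : β → α} (hg : Measurable g) :
    μ {ω | X ω = g (Z ω)} = 0 := by
  have hgraph : MeasurableSet {p : β × α | p.2 = g p.1} :=
    measurableSet_eq_fun measurable_snd (hg.comp measurable_fst)
  have hmap := (indepFun_iff_map_prod_eq_prod_map_map hZ.aemeasurable hX.aemeasurable).mp hZX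
  calc μ {ω | X ω = g (Z ω)} = μ.map (fun ω ↦ (Z ω, X ω)) {p | p.2 = g p.1} := by
        rw [Measure.map_apply (hZ.prodMk hX) hgraph]; rfl
    _ = 0 := by
        rw [hmap, Measure.prod_apply hgraph]
        simp [measure_singleton]

theorem ProbabilityTheory.iIndepFun.indepFun_prodMk_finsetSum {Ω ι β : Type*}
    [MeasurableSpace Ω] {μ : Measure Ω} [MeasurableSpace β] [AddCommMonoid β] [MeasurableAdd₂ β]
    {f : ι → Ω → β} (hf : iIndepFun f μ) (hmeas : ∀ i, Measurable (f i)) {S : Finset ι}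
    {i k : ι} (hi : i ∈ S) (hk : k ∉ S) :
    IndepFun (fun ω ↦ (f i ω, ∑ j ∈ S, f j ω)) (f k) μ := by
  have h := (hf.indepFun_finset S {k} (disjoint_singleton_right.mpr hk) hmeas).comp
    ((measurable_pi_apply ⟨i, hi⟩).prodMk (measurable_sum univ fun j _ ↦ measurable_pi_apply j))
    (measurable_pi_apply ⟨k, mem_singleton_self k⟩)
  convert h using 1
  · funext ω
    simp only [Function.comp_apply, sum_coe_sort S fun j ↦ f j ω]
  · rfl

/-- For i.i.d. responses with atomless distribution, almost surely the empirical CART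
criterion is not constant as a function of the split location. -/
theorem stmt2 {Ω : Type*} [MeasurableSpace Ω] (μ : Measure Ω) [IsProbabilityMeasure μ]
    (n : ℕ) (hn : 3 ≤ n) (Y : ℕ → Ω → ℝ) (hmeas : ∀ i, Measurable (Y i))
    (hindep : iIndepFun Y μ)
    (ν₀ : Measure ℝ) (hid : ∀ i, μ.map (Y i) = ν₀) [NullSingletonClass ν₀] :
    μ {ω | ∃ K : ℝ, ∀ κ ∈ Finset.Icc 1 (n - 1),
      ((κ : ℝ) * ((n : ℝ) - κ) / n) *
        ((1 / (κ : ℝ)) * ∑ l ∈ Finset.Icc 1 κ, Y l ω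
          - (1 / ((n : ℝ) - κ)) * ∑ l ∈ Finset.Icc (κ + 1) n, Y l ω) ^ 2 = K} = 0 := by
  set Z : Ω → ℝ × ℝ := fun ω ↦ (Y 2 ω, ∑ l ∈ Icc 2 n, Y l ω)
  have hZ : Measurable Z := (hmeas 2).prodMk (measurable_sum _ fun l _ ↦ hmeas l)
  have hZY : IndepFun Z (Y 1) μ :=
    hindep.indepFun_prodMk_finsetSum hmeas (by simp; omega) (by simp)
  have : NullSingletonClass (μ.map (Y 1)) := hid 1 ▸ inferInstance
  have hnull (sign : ℝ) :
      μ {ω | Y 1 ω = (Z ω).1 + sign * √(cartTieThreshold n (Z ω).1 (Z ω).2)} = 0 :=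
    hZY.measure_eq_comp_eq_zero (hmeas 1) hZ
      (g := fun z ↦ z.1 + sign * √(cartTieThreshold n z.1 z.2))
      (by unfold cartTieThreshold; fun_prop)
  refine measure_mono_null ?_ (measure_union_null (hnull 1) (hnull (-1)))
  rintro ω ⟨K, hK⟩
  have h12 : cartCriterion n (Y · ω) 1 = cartCriterion n (Y · ω) 2 :=
    (hK 1 (by simp; omega)).trans (hK 2 (by simp; omega)).symm
  rw [cartCriterion_one_eq_two_iff hn] at h12
  simpa [Z, sub_eq_add_neg] using eq_add_sqrt_or_eq_sub_sqrt_of_sq_sub_eq h12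
end
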